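/- arXiv:2212.10195 — 3 statements merged into one kernel-verified Lean document; each statement's English description precedes it below -/
import Mathlib

section
/- If A ∈ ℍ^{n×n} is Hermitian (A = A*), then every right eigenvalue of A is real, and the spectrum of the complex adjoint matrix f(A) equals the right spectrum of A. -/
open Quaternion Matrix

noncomputable section

/-- The copy of a complex number inside the quaternions (span of 1 and i). -/
def toQ (z : ℂ) : ℍ[ℝ] := ⟨z.re, z.im, 0, 0⟩

/-- First complex component of a quaternion: a = c1 a + (c2 a)·j. -/
def c1 (a : ℍ[ℝ]) : ℂ := ⟨a.re, a.imI⟩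
/-- Second complex component of a quaternion. -/
def c2 (a : ℍ[ℝ]) : ℂ := ⟨a.imJ, a.imK⟩

/-- Similarity of quaternions: p = h⁻¹ q h for some nonzero h. -/
def qSimilar (p q : ℍ[ℝ]) : Prop := ∃ h : ℍ[ℝ], h ≠ 0 ∧ p = h⁻¹ * q * h

/-- q is a right eigenvalue of A. -/
def RightEig {n : ℕ} (A : Matrix (Fin n) (Fin n) ℍ[ℝ]) (q : ℍ[ℝ]) : Prop :=
  ∃ x : Fin n → ℍ[ℝ], x ≠ 0 ∧ A.mulVec x = fun i => x i * q

/-- The complex adjoint matrix of a quaternion matrix. -/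
def fAdj {n : ℕ} (A : Matrix (Fin n) (Fin n) ℍ[ℝ]) :
    Matrix (Fin n ⊕ Fin n) (Fin n ⊕ Fin n) ℂ :=
  Matrix.fromBlocks (A.map c1) (A.map c2)
    (-(A.map (fun a => starRingEnd ℂ (c2 a)))) (A.map (fun a => starRingEnd ℂ (c1 a)))

/-- Algebraic multiplicity of an eigenvalue of a complex matrix. -/
def algMult {m : Type*} [Fintype m] [DecidableEq m] (B : Matrix m m ℂ) (μ : ℂ) : ℕ :=
  (Matrix.charpoly B).rootMultiplicity μ

/-- Geometric multiplicity of an eigenvalue of a complex matrix. -/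
def geoMult {m : Type*} [Fintype m] [DecidableEq m] (B : Matrix m m ℂ) (μ : ℂ) : ℕ :=
  Module.finrank ℂ (LinearMap.ker (Matrix.mulVecLin (B - μ • 1)))

/-- The set of right q-eigenvectors (with 0). -/
def eigSet {n : ℕ} (A : Matrix (Fin n) (Fin n) ℍ[ℝ]) (q : ℍ[ℝ]) : Set (Fin n → ℍ[ℝ]) :=
  {x | A.mulVec x = fun i => x i * q}


/-- The [q]-eigenspace as a right ℍ-subspace of ℍⁿ. -/
def Vclass {n : ℕ} (A : Matrix (Fin n) (Fin n) ℍ[ℝ]) (q : ℍ[ℝ]) :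
    Submodule ℍ[ℝ]ᵐᵒᵖ (Fin n → ℍ[ℝ]) :=
  Submodule.span ℍ[ℝ]ᵐᵒᵖ (⋃ q' ∈ {p | qSimilar p q}, eigSet A q')

/-- geometric multiplicity -/
def gm {n : ℕ} (A : Matrix (Fin n) (Fin n) ℍ[ℝ]) (q : ℍ[ℝ]) : ℕ :=
  Module.finrank ℍ[ℝ]ᵐᵒᵖ (Vclass A q)

/-!
If `A x = x q` with `A` Hermitian and `x ≠ 0`, then `x* A x = (x* x) q`, where `x* A x` is
self-adjoint and `x* x` is a nonzero real; hence `q = q̄`, i.e. `q` is real.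

The additive bijection `ℍⁿ ≃ ℂ²ⁿ`, `x ↦ (c1 x, -conj (c2 x))`, intertwines `A` with `f(A)` and
right multiplication by `toQ λ` with scalar multiplication by `λ`, so the eigenvectors of `f(A)`
for `λ` are exactly the images of the right eigenvectors of `A` for `toQ λ`.
-/

section Hermitian

variable {m : Type*} [Fintype m]

lemma Matrix.IsHermitian.isSelfAdjoint_star_dotProduct_mulVec {α : Type*} [NonUnitalSemiring α]
    [StarRing α] {A : Matrix m m α} (hA : A.IsHermitian) (x : m → α) :
    IsSelfAdjoint (star x ⬝ᵥ (A *ᵥ x)) := by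
  rw [IsSelfAdjoint, ← star_dotProduct_star, star_star, star_mulVec, hA.eq, dotProduct_mulVec]

variable {R : Type*}

lemma Quaternion.star_dotProduct_self [CommRing R] (x : m → ℍ[R]) :
    star x ⬝ᵥ x = ((∑ i, normSq (x i) : R) : ℍ[R]) := by
  simp only [dotProduct, Pi.star_apply, star_mul_self, ← algebraMap_def, map_sum]

lemma Quaternion.star_dotProduct_self_ne_zero [Field R] [LinearOrder R] [IsStrictOrderedRing R]
    {x : m → ℍ[R]} (hx : x ≠ 0) : star x ⬝ᵥ x ≠ 0 := by
  rw [star_dotProduct_self, Ne, ← coe_zero, coe_inj,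
    Fintype.sum_eq_zero_iff_of_nonneg fun _ => normSq_nonneg]
  simpa [funext_iff] using hx

lemma Matrix.IsHermitian.im_eq_zero_of_mulVec_eq_mul_right [Field R] [LinearOrder R]
    [IsStrictOrderedRing R] {A : Matrix m m ℍ[R]} (hA : A.IsHermitian) {x : m → ℍ[R]}
    (hx : x ≠ 0) {q : ℍ[R]} (hAx : A *ᵥ x = fun i => x i * q) : q.im = 0 := by
  have hquad : star x ⬝ᵥ (A *ᵥ x) = (star x ⬝ᵥ x) * q := by
    simp only [hAx, dotProduct, Finset.sum_mul, mul_assoc]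
  have hself := hA.isSelfAdjoint_star_dotProduct_mulVec x
  have hnorm := star_dotProduct_self x
  rw [hquad, hnorm, IsSelfAdjoint, star_mul, star_coe, ← coe_commutes] at hself
  have hq : star q = q := mul_left_cancel₀ (hnorm ▸ star_dotProduct_self_ne_zero hx) hself
  rw [star_eq_self.mp hq, im_coe]

end Hermitian

section ComplexAdjoint

lemma c1_add (a b : ℍ[ℝ]) : c1 (a + b) = c1 a + c1 b := rfl

lemma c2_add (a b : ℍ[ℝ]) : c2 (a + b) = c2 a + c2 b := rfl

lemma c1_sum {ι : Type*} (s : Finset ι) (f : ι → ℍ[ℝ]) :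
    c1 (∑ i ∈ s, f i) = ∑ i ∈ s, c1 (f i) :=
  map_sum (AddMonoidHom.mk' c1 c1_add) f s

lemma c2_sum {ι : Type*} (s : Finset ι) (f : ι → ℍ[ℝ]) :
    c2 (∑ i ∈ s, f i) = ∑ i ∈ s, c2 (f i) :=
  map_sum (AddMonoidHom.mk' c2 c2_add) f s

lemma c1_mul (a b : ℍ[ℝ]) : c1 (a * b) = c1 a * c1 b - c2 a * star (c2 b) := by
  apply Complex.ext <;> simp [c1, c2] <;> ring

lemma c2_mul (a b : ℍ[ℝ]) : c2 (a * b) = c1 a * c2 b + c2 a * star (c1 b) := by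
  apply Complex.ext <;> simp [c1, c2] <;> ring

@[simp] lemma c1_toQ (l : ℂ) : c1 (toQ l) = l := rfl

@[simp] lemma c2_toQ (l : ℂ) : c2 (toQ l) = 0 := rfl

/-- Encodes each coordinate `a` as the first column `(c1 a, -conj (c2 a))` of its complex
adjoint. -/
def complexVecEquiv (m : Type*) : (m → ℍ[ℝ]) ≃+ (m ⊕ m → ℂ) where
  toFun x := Sum.elim (fun i => c1 (x i)) (fun i => -star (c2 (x i)))
  invFun v i := ⟨(v (.inl i)).re, (v (.inl i)).im, -(v (.inr i)).re, (v (.inr i)).im⟩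
  left_inv x := by ext i <;> simp [c1, c2]
  right_inv v := by ext (i | i) <;> apply Complex.ext <;> simp [c1, c2]
  map_add' x y := by ext (i | i) <;> simp [c1_add, c2_add, add_comm]

variable {m : Type*}

@[simp] lemma complexVecEquiv_apply_inl (x : m → ℍ[ℝ]) (i : m) :
    complexVecEquiv m x (.inl i) = c1 (x i) := rfl

@[simp] lemma complexVecEquiv_apply_inr (x : m → ℍ[ℝ]) (i : m) :
    complexVecEquiv m x (.inr i) = -star (c2 (x i)) := rfl

lemma complexVecEquiv_mul_toQ (x : m → ℍ[ℝ]) (l : ℂ) :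
    complexVecEquiv m (fun i => x i * toQ l) = l • complexVecEquiv m x := by
  ext (i | i) <;> simp [c1_mul, c2_mul, mul_comm]

lemma fAdj_mulVec_complexVecEquiv {n : ℕ} (A : Matrix (Fin n) (Fin n) ℍ[ℝ])
    (x : Fin n → ℍ[ℝ]) : fAdj A *ᵥ complexVecEquiv _ x = complexVecEquiv _ (A *ᵥ x) := by
  ext (i | i) <;>
    simp [fAdj, mulVec, dotProduct, c1_sum, c2_sum, c1_mul, c2_mul, Finset.sum_add_distrib]
  ring

lemma exists_fAdj_eigenvector_iff_rightEig {n : ℕ} (A : Matrix (Fin n) (Fin n) ℍ[ℝ]) (l : ℂ) :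
    (∃ v : Fin n ⊕ Fin n → ℂ, v ≠ 0 ∧ fAdj A *ᵥ v = l • v) ↔ RightEig A (toQ l) := by
  rw [RightEig, (complexVecEquiv (Fin n)).surjective.exists]
  simp only [ne_eq, map_eq_zero_iff _ (complexVecEquiv _).injective,
    fAdj_mulVec_complexVecEquiv, ← complexVecEquiv_mul_toQ, (complexVecEquiv _).injective.eq_iff]

end ComplexAdjoint

/-- For Hermitian A, all right eigenvalues are real and Spec(f(A)) = σ_r(A). -/
theorem hermitian_rightSpectrum_real {n : ℕ} (A : Matrix (Fin n) (Fin n) ℍ[ℝ])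
    (hA : A = Aᴴ) :
    (∀ q : ℍ[ℝ], RightEig A q → q.im = 0) ∧
      (∀ l : ℂ, (∃ v : (Fin n ⊕ Fin n) → ℂ, v ≠ 0 ∧ (fAdj A).mulVec v = l • v) ↔
        RightEig A (toQ l)) :=
  ⟨fun _ ⟨_, hx, hAx⟩ => IsHermitian.im_eq_zero_of_mulVec_eq_mul_right hA.symm hx hAx,
    exists_fAdj_eigenvector_iff_rightEig A⟩
end
end

section
/- Every square quaternion matrix A ∈ ℍ^{n×n} has a right eigenvalue which is a complex number with nonnegative imaginary part. -/
open Quaternion Matrix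

noncomputable section

/-!
Let complex numbers act on `ℍⁿ` by right multiplication. This makes `ℍⁿ` a nonzero
finite-dimensional complex vector space on which `x ↦ A x` is `ℂ`-linear, so since `ℂ` is
algebraically closed there is `x ≠ 0` with `A x = x μ` for some `μ : ℂ`. Conjugation by `j`
sends `μ` to `conj μ`, so `x j` is a right eigenvector for `conj μ`, and one of `μ`, `conj μ`
has nonnegative imaginary part.
-/

section RightComplexStructure

variable {ι : Type*}

abbrev rightComplexModule : Module ℂ (ι → ℍ[ℝ]) :=
  Module.compHom _ (Quaternion.ofComplex.toOpposite fun z w => (Commute.all z w).map _).toRingHom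

attribute [local instance] rightComplexModule

theorem complex_smul_eq_mul (z : ℂ) (x : ι → ℍ[ℝ]) : z • x = fun i => x i * toQ z := rfl

instance : IsScalarTower ℝ ℂ (ι → ℍ[ℝ]) where
  smul_assoc r z x := by
    funext i
    change x i * Quaternion.ofComplex (r • z) = r • (x i * Quaternion.ofComplex z)
    rw [map_smul, mul_smul_comm]

variable [Fintype ι]

def Matrix.mulVecRightComplex (A : Matrix ι ι ℍ[ℝ]) : Module.End ℂ (ι → ℍ[ℝ]) where
  toFun := A.mulVec
  map_add' := A.mulVec_add
  map_smul' z x := A.mulVec_smul (MulOpposite.op (toQ z)) x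

theorem exists_complex_right_eigenvector [Nonempty ι] (A : Matrix ι ι ℍ[ℝ]) :
    ∃ μ : ℂ, ∃ x : ι → ℍ[ℝ], x ≠ 0 ∧ A *ᵥ x = fun i => x i * toQ μ := by
  have : FiniteDimensional ℂ (ι → ℍ[ℝ]) := .of_restrictScalars_finite ℝ ℂ _
  obtain ⟨μ, hμ⟩ := Module.End.exists_eigenvalue A.mulVecRightComplex
  obtain ⟨x, hx⟩ := hμ.exists_hasEigenvector
  exact ⟨μ, x, hx.2, complex_smul_eq_mul μ x ▸ hx.apply_eq_smul⟩

end RightComplexStructure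

theorem RightEig.of_qSimilar {n : ℕ} {A : Matrix (Fin n) (Fin n) ℍ[ℝ]} {p q : ℍ[ℝ]}
    (hq : RightEig A q) (hpq : qSimilar p q) : RightEig A p := by
  obtain ⟨h, hh, rfl⟩ := hpq
  obtain ⟨x, hx0, hx⟩ := hq
  refine ⟨MulOpposite.op h • x, fun hxh => hx0 ?_, ?_⟩
  · exact (smul_eq_zero.mp hxh).resolve_left (by simpa using hh)
  · rw [A.mulVec_smul, hx]
    funext i
    simp [mul_assoc, hh]

open ComplexConjugate in
theorem qSimilar_toQ_conj (z : ℂ) : qSimilar (toQ (conj z)) (toQ z) := by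
  obtain ⟨j, hj⟩ : ∃ j : ℍ[ℝ], j = ⟨0, 0, 1, 0⟩ := ⟨_, rfl⟩
  have hj0 : j ≠ 0 := fun h => by simpa [hj] using congrArg QuaternionAlgebra.imJ h
  refine ⟨j, hj0, ?_⟩
  rw [mul_assoc, eq_inv_mul_iff_mul_eq₀ hj0]
  ext <;> simp only [Quaternion.re_mul, Quaternion.imI_mul, Quaternion.imJ_mul, Quaternion.imK_mul]
    <;> simp [hj, toQ]

/-- Every square quaternion matrix has a right eigenvalue which is a complex number
with nonnegative imaginary part. -/
theorem exists_complex_right_eigenvalue {n : ℕ} (hn : 0 < n)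
    (A : Matrix (Fin n) (Fin n) ℍ[ℝ]) :
    ∃ l : ℂ, 0 ≤ l.im ∧ RightEig A (toQ l) := by
  have : Nonempty (Fin n) := ⟨⟨0, hn⟩⟩
  obtain ⟨μ, hμ⟩ : ∃ μ : ℂ, RightEig A (toQ μ) := exists_complex_right_eigenvector A
  rcases le_total 0 μ.im with him | him
  · exact ⟨μ, him, hμ⟩
  · exact ⟨starRingEnd ℂ μ, by simpa using him, hμ.of_qSimilar (qSimilar_toQ_conj μ)⟩
end
end

section
/- For every A ∈ ℍ^{n×n} and every right eigenvalue q of A, the algebraic multiplicity of q is at least its geometric multiplicity: a.m.(q,A) ≥ g.m.(q,A). Moreover, if A and B are similar quaternion matrices (B = S⁻¹AS for some invertible S), they have the same right eigenvalues with equal algebraic and geometric multiplicities. -/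
open Quaternion Matrix

noncomputable section

/-!
Every vector of `V_[q]` is annihilated by `p(A)`, where `p(t) = t² - 2 Re(q) t + |q|²` is the
real quadratic vanishing on the whole similarity class of `q`. For a Schur form `T = Uᴴ A U`, the
matrix `p(T)` is upper triangular with diagonal `p(T i i)`, and `p(T i i) = 0` exactly when
`T i i = λ_q`; back substitution then shows that a vector of `V_[q]` vanishing at these positions
is zero, so `g.m.(q, T) ≤ a.m.(q, A)`. Conjugation by `S` moves right eigenvectors by `S⁻¹`, which
preserves right eigenvalues and the dimension of `V_[q]`. Finally, the diagonal of a Schur form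
is recovered from the characteristic polynomial of the complex adjoint matrix, whose roots are
the diagonal entries and their conjugates, and that polynomial is a similarity invariant.
-/

open Polynomial

@[simp] lemma toQ_re (z : ℂ) : (toQ z).re = z.re := rfl
@[simp] lemma toQ_imI (z : ℂ) : (toQ z).imI = z.im := rfl
@[simp] lemma toQ_imJ (z : ℂ) : (toQ z).imJ = 0 := rfl
@[simp] lemma toQ_imK (z : ℂ) : (toQ z).imK = 0 := rfl

lemma toQ_injective : Function.Injective toQ := fun _ _ h =>
  Complex.ext (congrArg QuaternionAlgebra.re h) (congrArg QuaternionAlgebra.imI h)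

def toQAlgHom : ℂ →ₐ[ℝ] ℍ[ℝ] :=
  Complex.liftAux (toQ Complex.I) (by ext <;> simp [re_mul, imI_mul, imJ_mul, imK_mul])

lemma toQAlgHom_apply (z : ℂ) : toQAlgHom z = toQ z := by
  ext <;> simp [toQAlgHom]

lemma Quaternion.re_mul_comm (a b : ℍ[ℝ]) : (a * b).re = (b * a).re := by
  simp only [re_mul]; ring

lemma qSimilar.re_eq {p q : ℍ[ℝ]} (h : qSimilar p q) : p.re = q.re := by
  obtain ⟨g, hg, rfl⟩ := h
  rw [mul_assoc, Quaternion.re_mul_comm, mul_assoc, mul_inv_cancel₀ hg, mul_one]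

lemma qSimilar.normSq_eq {p q : ℍ[ℝ]} (h : qSimilar p q) : normSq p = normSq q := by
  obtain ⟨g, hg, rfl⟩ := h
  have : normSq g ≠ 0 := normSq_ne_zero.mpr hg
  simp only [map_mul, map_inv₀]
  field_simp

def classPoly (q : ℍ[ℝ]) : ℝ[X] := X ^ 2 - C (2 * q.re) * X + C (normSq q)

lemma aeval_classPoly_self (p : ℍ[ℝ]) : aeval p (classPoly p) = 0 := by
  ext <;> simp [classPoly, sq, normSq_def'] <;> ring

lemma classPoly_eq_of_qSimilar {p q : ℍ[ℝ]} (h : qSimilar p q) : classPoly p = classPoly q := by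
  rw [classPoly, classPoly, h.re_eq, h.normSq_eq]

lemma aeval_toQ_classPoly_toQ (μ l : ℂ) :
    aeval (toQ μ) (classPoly (toQ l)) = toQ ((μ - l) * (μ - starRingEnd ℂ l)) := by
  rw [← toQAlgHom_apply, aeval_algHom_apply, toQAlgHom_apply]
  congr 1
  apply Complex.ext <;> simp [classPoly, normSq_def', sq, Complex.mul_re, Complex.mul_im] <;> ring

lemma eq_of_aeval_toQ_classPoly_eq_zero {μ l : ℂ} (hμ : 0 ≤ μ.im) (hl : 0 ≤ l.im)
    (h : aeval (toQ μ) (classPoly (toQ l)) = 0) : μ = l := by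
  have h0 : (μ - l) * (μ - starRingEnd ℂ l) = 0 :=
    toQ_injective (by rw [← aeval_toQ_classPoly_toQ, h]; ext <;> simp)
  rcases mul_eq_zero.mp h0 with h | h
  · exact sub_eq_zero.mp h
  · have hconj := sub_eq_zero.mp h
    have him : μ.im = -l.im := by rw [hconj, Complex.conj_im]
    exact hconj.trans (Complex.conj_eq_iff_im.mpr (by linarith))

namespace Matrix

lemma mulVec_mul_right {m n A : Type*} [Fintype n] [Semiring A] (M : Matrix m n A)
    (x : n → A) (c : A) : M *ᵥ (fun i => x i * c) = fun i => (M *ᵥ x) i * c :=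
  M.mulVec_smul (MulOpposite.op c) x

lemma mulVec_aeval_of_mulVec_eq {m R A : Type*} [Fintype m] [DecidableEq m]
    [CommSemiring R] [Semiring A] [Algebra R A] {M : Matrix m m A} {x : m → A} {p : A}
    (h : M *ᵥ x = fun i => x i * p) (f : R[X]) :
    aeval M f *ᵥ x = fun i => x i * aeval p f := by
  induction f using Polynomial.induction_on with
  | C a =>
    funext i
    simp [algebraMap_eq_diagonal, mulVec_diagonal, Algebra.commutes]
  | add f g hf hg =>
    funext i
    simp [add_mulVec, hf, hg, mul_add]
  | monomial k a ih =>
    rw [pow_succ, ← mul_assoc, map_mul (aeval M), map_mul (aeval p), aeval_X, aeval_X,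
      ← mulVec_mulVec, h, mulVec_mul_right, ih]
    simp only [mul_assoc]

namespace IsUpperTriangular

variable {m R A : Type*} [Fintype m] [LinearOrder m]

lemma mul_apply_self [NonUnitalNonAssocSemiring R] {M N : Matrix m m R}
    (hM : M.IsUpperTriangular) (hN : N.IsUpperTriangular) (i : m) :
    (M * N) i i = M i i * N i i := by
  refine Finset.sum_eq_single i (fun j _ hji => ?_) (by simp)
  rcases lt_or_gt_of_ne hji with h | h
  · exact mul_eq_zero_of_left (hM h) _
  · exact mul_eq_zero_of_right _ (hN h)

lemma eq_zero_of_mulVec_eq_zero [Ring R] [NoZeroDivisors R] {M : Matrix m m R}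
    (hM : M.IsUpperTriangular) {v : m → R} (hv : M *ᵥ v = 0)
    (hdiag : ∀ i, M i i = 0 → v i = 0) : v = 0 := by
  classical
  by_contra hne
  have hs : (Finset.univ.filter fun i => v i ≠ 0).Nonempty := by
    obtain ⟨i, hi⟩ := Function.ne_iff.mp hne
    exact ⟨i, by simpa using hi⟩
  set i := (Finset.univ.filter fun i => v i ≠ 0).max' hs
  have hvi : v i ≠ 0 := (Finset.mem_filter.mp (Finset.max'_mem _ hs)).2
  have hvj : ∀ j, i < j → v j = 0 := fun j hij => by
    by_contra h
    exact (Finset.le_max' _ j (by simpa using h)).not_gt hij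
  have hMi : (M *ᵥ v) i = M i i * v i := by
    refine Finset.sum_eq_single i (fun j _ hji => ?_) (by simp)
    rcases lt_or_gt_of_ne hji with h | h
    · exact mul_eq_zero_of_left (hM h) _
    · exact mul_eq_zero_of_right _ (hvj j h)
  rw [hv, Pi.zero_apply, eq_comm, mul_eq_zero] at hMi
  exact hvi (hdiag i (hMi.resolve_right hvi))

variable [DecidableEq m] [CommSemiring R] [Semiring A] [Algebra R A]

lemma aeval {M : Matrix m m A} (hM : M.IsUpperTriangular) (f : R[X]) :
    (Polynomial.aeval M f).IsUpperTriangular := by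
  have : Algebra.adjoin R {M} ≤ blockTriangularSubalgebra R A id :=
    Algebra.adjoin_le (Set.singleton_subset_iff.mpr hM)
  exact this (aeval_mem_adjoin_singleton R M)

lemma aeval_apply_self {M : Matrix m m A} (hM : M.IsUpperTriangular) (f : R[X]) (i : m) :
    Polynomial.aeval M f i i = Polynomial.aeval (M i i) f := by
  induction f using Polynomial.induction_on with
  | C a => simp [algebraMap_matrix_apply]
  | add f g hf hg => simp [hf, hg]
  | monomial k a ih =>
    rw [pow_succ, ← mul_assoc, map_mul (Polynomial.aeval M), map_mul (Polynomial.aeval (M i i)),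
      aeval_X, aeval_X, (hM.aeval _).mul_apply_self hM, ih]

end IsUpperTriangular

end Matrix

lemma conj_conj_of_mul_eq_one {M : Type*} [Monoid M] {a s s' : M} (h : s * s' = 1) :
    s * (s' * a * s) * s' = a := by
  simp only [← mul_assoc, h, one_mul]
  rw [mul_assoc, h, mul_one]

section Eigenspaces

variable {n : ℕ}

lemma Vclass_le_ker_aeval_classPoly (A : Matrix (Fin n) (Fin n) ℍ[ℝ]) (q : ℍ[ℝ]) :
    Vclass A q ≤ LinearMap.ker (mulVecBilin ℍ[ℝ] ℍ[ℝ]ᵐᵒᵖ (aeval A (classPoly q))) := by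
  refine Submodule.span_le.mpr (Set.iUnion₂_subset fun p hp x hx => ?_)
  change aeval A (classPoly q) *ᵥ x = 0
  rw [mulVec_aeval_of_mulVec_eq hx, ← classPoly_eq_of_qSimilar hp, aeval_classPoly_self]
  exact funext fun _ => mul_zero _

-- The coordinates land in `ℍ[ℝ]ᵐᵒᵖ`, the scalar ring itself, so that the target has `finrank`
-- equal to `#s` by `Module.finrank_fintype_fun_eq_card`.
def restrictOp {m : Type*} (s : Set m) : (m → ℍ[ℝ]) →ₗ[ℍ[ℝ]ᵐᵒᵖ] (s → ℍ[ℝ]ᵐᵒᵖ) where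
  toFun v i := MulOpposite.op (v i)
  map_add' _ _ := rfl
  map_smul' _ _ := rfl

lemma gm_le_ncard_of_isUpperTriangular {T : Matrix (Fin n) (Fin n) ℍ[ℝ]}
    (hT : T.IsUpperTriangular) (hdiag : ∀ i, ∃ μ : ℂ, 0 ≤ μ.im ∧ T i i = toQ μ)
    {q : ℍ[ℝ]} {l : ℂ} (hl : 0 ≤ l.im) (hq : qSimilar q (toQ l)) :
    gm T q ≤ {i | T i i = toQ l}.ncard := by
  classical
  set s := {i | T i i = toQ l}
  have hinj : Function.Injective ((restrictOp s).domRestrict (Vclass T q)) := by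
    rw [← LinearMap.ker_eq_bot, LinearMap.ker_eq_bot']
    rintro ⟨v, hv⟩ hv0
    have hvs : ∀ i ∈ s, v i = 0 := fun i hi => MulOpposite.op_injective (congrFun hv0 ⟨i, hi⟩)
    refine Subtype.ext ((hT.aeval (classPoly q)).eq_zero_of_mulVec_eq_zero
      (Vclass_le_ker_aeval_classPoly T q hv) fun i hi => hvs i ?_)
    obtain ⟨μ, hμ, hTi⟩ := hdiag i
    rw [hT.aeval_apply_self, hTi, classPoly_eq_of_qSimilar hq] at hi
    rw [Set.mem_ofPred_eq, hTi, eq_of_aeval_toQ_classPoly_eq_zero hμ hl hi]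
  calc gm T q ≤ Module.finrank ℍ[ℝ]ᵐᵒᵖ (s → ℍ[ℝ]ᵐᵒᵖ) :=
        LinearMap.finrank_le_finrank_of_injective hinj
    _ = s.ncard := by
      rw [Module.finrank_fintype_fun_eq_card, ← Nat.card_eq_fintype_card, Nat.card_coe_set_eq]

variable {A S S' : Matrix (Fin n) (Fin n) ℍ[ℝ]}

lemma mulVec_mem_eigSet_conj (h : S * S' = 1) {p : ℍ[ℝ]} {x : Fin n → ℍ[ℝ]}
    (hx : x ∈ eigSet A p) : S' *ᵥ x ∈ eigSet (S' * A * S) p := by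
  change (S' * A * S) *ᵥ (S' *ᵥ x) = fun i => (S' *ᵥ x) i * p
  rw [mulVec_mulVec, mul_assoc (S' * A), h, mul_one, ← mulVec_mulVec, hx, mulVec_mul_right]

lemma RightEig.conj (h : S * S' = 1) {p : ℍ[ℝ]} (hp : RightEig A p) :
    RightEig (S' * A * S) p := by
  obtain ⟨x, hx0, hx⟩ := hp
  refine ⟨S' *ᵥ x, fun h0 => hx0 ?_, mulVec_mem_eigSet_conj h hx⟩
  rw [← one_mulVec x, ← h, ← mulVec_mulVec, h0, mulVec_zero]

lemma Vclass_conj (h : S * S' = 1) (h' : S' * S = 1) (q : ℍ[ℝ]) :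
    Vclass (S' * A * S) q = (Vclass A q).map (mulVecBilin ℍ[ℝ] ℍ[ℝ]ᵐᵒᵖ S') := by
  apply le_antisymm
  · refine Submodule.span_le.mpr (Set.iUnion₂_subset fun p hp x hx => ?_)
    have hSx := mulVec_mem_eigSet_conj (A := S' * A * S) h' hx
    rw [conj_conj_of_mul_eq_one h] at hSx
    refine ⟨S *ᵥ x, Submodule.subset_span (Set.mem_iUnion₂_of_mem hp hSx), ?_⟩
    simp [mulVec_mulVec, h']
  · refine (Submodule.map_span_le _ _ _).mpr fun x hx => ?_
    obtain ⟨p, hp, hx⟩ := Set.mem_iUnion₂.mp hx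
    exact Submodule.subset_span (Set.mem_iUnion₂_of_mem hp (mulVec_mem_eigSet_conj h hx))

lemma gm_conj (h : S * S' = 1) (h' : S' * S = 1) (q : ℍ[ℝ]) : gm (S' * A * S) q = gm A q := by
  have hinj : Function.Injective (mulVecBilin ℍ[ℝ] ℍ[ℝ]ᵐᵒᵖ S') :=
    Function.LeftInverse.injective (g := (S *ᵥ ·)) fun x => by simp [mulVec_mulVec, h]
  rw [gm, gm, Vclass_conj h h']
  exact (Submodule.equivMapOfInjective _ hinj _).finrank_eq.symm

end Eigenspaces

def quaternionToMatrix : ℍ[ℝ] →+* Matrix (Fin 2) (Fin 2) ℂ where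
  toFun a := !![c1 a, c2 a; -starRingEnd ℂ (c2 a), starRingEnd ℂ (c1 a)]
  map_one' := by
    ext i j; fin_cases i <;> fin_cases j <;> apply Complex.ext <;> simp [c1, c2]
  map_mul' a b := by
    ext i j; fin_cases i <;> fin_cases j <;> apply Complex.ext <;>
      simp [c1, c2, Matrix.mul_apply, re_mul, imI_mul, imJ_mul, imK_mul] <;> ring
  map_zero' := by
    ext i j; fin_cases i <;> fin_cases j <;> apply Complex.ext <;> simp [c1, c2]
  map_add' a b := by
    ext i j; fin_cases i <;> fin_cases j <;> apply Complex.ext <;> simp [c1, c2] <;> ring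

-- This is `fAdj` with the index set `Fin n ⊕ Fin n` reordered as `Fin n × Fin 2`: interleaving
-- the two blocks keeps triangular matrices triangular for the lexicographic order.
def complexAdjoint (m : Type*) [Fintype m] [DecidableEq m] :
    Matrix m m ℍ[ℝ] →+* Matrix (m × Fin 2) (m × Fin 2) ℂ :=
  (compRingEquiv m (Fin 2) ℂ : _ →+* _).comp quaternionToMatrix.mapMatrix

lemma charpoly_complexAdjoint_conj {m : Type*} [Fintype m] [DecidableEq m]
    {A S S' : Matrix m m ℍ[ℝ]} (h : S * S' = 1) :
    (complexAdjoint m (S' * A * S)).charpoly = (complexAdjoint m A).charpoly := by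
  rw [map_mul, map_mul, charpoly_mul_comm, ← mul_assoc, ← map_mul, h, map_one, one_mul]

lemma Multiset.count_map_univ_eq_ncard {α β : Type*} [Fintype α] [DecidableEq β] (f : α → β)
    (b : β) : (Finset.univ.val.map f).count b = {a | f a = b}.ncard := by
  classical
  rw [Multiset.count_map, Set.ncard_eq_toFinset_card']
  simp [eq_comm]
  rfl

section ComplexAdjoint

variable {m : Type*} [Fintype m] [LinearOrder m] {T : Matrix m m ℍ[ℝ]}

lemma isUpperTriangular_reindex_toLex_complexAdjoint (hT : T.IsUpperTriangular)
    (hdiag : ∀ i, c2 (T i i) = 0) :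
    (reindex toLex toLex (complexAdjoint m T)).IsUpperTriangular := by
  rintro ⟨i, a⟩ ⟨j, b⟩ (hlt : toLex (j, b) < toLex (i, a))
  change quaternionToMatrix (T i j) a b = 0
  rcases Prod.Lex.toLex_lt_toLex.mp hlt with h | ⟨rfl, hab⟩
  · rw [hT h, map_zero]; rfl
  · obtain ⟨rfl, rfl⟩ : a = 1 ∧ b = 0 := by simp only at hab; omega
    simp [quaternionToMatrix, hdiag]

lemma charpoly_complexAdjoint_of_isUpperTriangular (hT : T.IsUpperTriangular)
    (hdiag : ∀ i, c2 (T i i) = 0) :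
    (complexAdjoint m T).charpoly =
      ∏ i, (X - C (c1 (T i i))) * (X - C (starRingEnd ℂ (c1 (T i i)))) := by
  rw [← charpoly_reindex toLex,
    charpoly_of_isUpperTriangular _ (isUpperTriangular_reindex_toLex_complexAdjoint hT hdiag),
    ← Equiv.prod_comp toLex, Fintype.prod_prod_type]
  simp [Fin.prod_univ_two, complexAdjoint, quaternionToMatrix]

lemma roots_charpoly_complexAdjoint_of_isUpperTriangular (hT : T.IsUpperTriangular)
    (hdiag : ∀ i, c2 (T i i) = 0) :
    (complexAdjoint m T).charpoly.roots =
      Finset.univ.val.map (fun i => c1 (T i i)) +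
        (Finset.univ.val.map fun i => c1 (T i i)).map (starRingEnd ℂ) := by
  have hroots : ∀ d : m → ℂ, (∏ i, (X - C (d i))).roots = Finset.univ.val.map d := fun d => by
    rw [Finset.prod_eq_multiset_prod, ← roots_multiset_prod_X_sub_C (Finset.univ.val.map d),
      Multiset.map_map]
    rfl
  rw [charpoly_complexAdjoint_of_isUpperTriangular hT hdiag, Finset.prod_mul_distrib,
    roots_mul (mul_ne_zero (monic_prod_X_sub_C _ _).ne_zero (monic_prod_X_sub_C _ _).ne_zero),
    hroots, hroots, Multiset.map_map]
  rfl

lemma count_roots_charpoly_complexAdjoint (hT : T.IsUpperTriangular)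
    (hdiag : ∀ i, ∃ μ : ℂ, 0 ≤ μ.im ∧ T i i = toQ μ) {l : ℂ} (hl : 0 ≤ l.im) :
    (complexAdjoint m T).charpoly.roots.count l =
      (if l.im = 0 then 2 else 1) * {i | T i i = toQ l}.ncard := by
  choose d hd hTd using hdiag
  have hc1 : ∀ i, c1 (T i i) = d i := fun i => by rw [hTd]; rfl
  have hD : {i | T i i = toQ l}.ncard = (Finset.univ.val.map d).count l := by
    rw [Multiset.count_map_univ_eq_ncard]
    simp only [hTd, toQ_injective.eq_iff]
  rw [roots_charpoly_complexAdjoint_of_isUpperTriangular hT (fun i => by rw [hTd]; rfl),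
    Multiset.count_add, funext hc1, hD]
  split_ifs with h0
  · have hl_real : l = starRingEnd ℂ l := (Complex.conj_eq_iff_im.mpr h0).symm
    rw [hl_real, Multiset.count_map_eq_count' _ _ (starRingEnd ℂ).injective, ← hl_real, two_mul]
  · have hconj : l ∉ (Finset.univ.val.map d).map (starRingEnd ℂ) := by
      simp only [Multiset.mem_map]
      rintro ⟨μ, ⟨i, -, rfl⟩, hμ⟩
      have him := congrArg Complex.im hμ
      rw [Complex.conj_im] at him
      exact h0 (by linarith [hd i])
    rw [Multiset.count_eq_zero.mpr hconj, add_zero, one_mul]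

lemma ncard_diag_eq_of_charpoly_complexAdjoint_eq {T' : Matrix m m ℍ[ℝ]}
    (hT : T.IsUpperTriangular) (hdiag : ∀ i, ∃ μ : ℂ, 0 ≤ μ.im ∧ T i i = toQ μ)
    (hT' : T'.IsUpperTriangular) (hdiag' : ∀ i, ∃ μ : ℂ, 0 ≤ μ.im ∧ T' i i = toQ μ)
    (h : (complexAdjoint m T).charpoly = (complexAdjoint m T').charpoly) {l : ℂ}
    (hl : 0 ≤ l.im) : {i | T i i = toQ l}.ncard = {i | T' i i = toQ l}.ncard := by
  have hcount := count_roots_charpoly_complexAdjoint hT hdiag hl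
  rw [h, count_roots_charpoly_complexAdjoint hT' hdiag' hl] at hcount
  exact Nat.eq_of_mul_eq_mul_left (by split_ifs <;> norm_num) hcount.symm

end ComplexAdjoint

theorem am_ge_gm_and_similarity_invariance_general {n : ℕ}
    (A : Matrix (Fin n) (Fin n) ℍ[ℝ]) (q : ℍ[ℝ])
    (lq : ℂ) (him : 0 ≤ lq.im) (hsim : qSimilar q (toQ lq)) :
    (∀ U T : Matrix (Fin n) (Fin n) ℍ[ℝ],
      Uᴴ * U = 1 → U * Uᴴ = 1 → T = Uᴴ * A * U →
      (∀ i j : Fin n, j < i → T i j = 0) →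
      (∀ i : Fin n, ∃ μ : ℂ, 0 ≤ μ.im ∧ T i i = toQ μ) →
      Set.ncard {i : Fin n | T i i = toQ lq} ≥ gm A q) ∧
    (∀ B S S' : Matrix (Fin n) (Fin n) ℍ[ℝ], S * S' = 1 → S' * S = 1 →
      B = S' * A * S →
      (∀ p : ℍ[ℝ], RightEig A p ↔ RightEig B p) ∧
      gm A q = gm B q ∧
      (∀ T T' U U' : Matrix (Fin n) (Fin n) ℍ[ℝ],
        Uᴴ * U = 1 → U * Uᴴ = 1 → T = Uᴴ * A * U →
        (∀ i j : Fin n, j < i → T i j = 0) →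
        (∀ i : Fin n, ∃ μ : ℂ, 0 ≤ μ.im ∧ T i i = toQ μ) →
        U'ᴴ * U' = 1 → U' * U'ᴴ = 1 → T' = U'ᴴ * B * U' →
        (∀ i j : Fin n, j < i → T' i j = 0) →
        (∀ i : Fin n, ∃ μ : ℂ, 0 ≤ μ.im ∧ T' i i = toQ μ) →
        Set.ncard {i : Fin n | T i i = toQ lq} =
          Set.ncard {i : Fin n | T' i i = toQ lq})) := by
  refine ⟨fun U T hU₁ hU hT htri hdiag => ?_, fun B S S' hS hS' hB => ?_⟩
  · calc gm A q = gm T q := by rw [hT, gm_conj hU hU₁]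
      _ ≤ _ := gm_le_ncard_of_isUpperTriangular htri hdiag him hsim
  subst hB
  refine ⟨fun p => ⟨RightEig.conj hS, fun hp => ?_⟩, (gm_conj hS hS' q).symm, ?_⟩
  · simpa only [conj_conj_of_mul_eq_one hS] using hp.conj hS'
  intro T T' U U' _ hU hT htri hdiag _ hU' hT' htri' hdiag'
  refine ncard_diag_eq_of_charpoly_complexAdjoint_eq htri hdiag htri' hdiag' ?_ him
  rw [hT, hT', charpoly_complexAdjoint_conj hU, charpoly_complexAdjoint_conj hU',
    charpoly_complexAdjoint_conj hS]

/-- a.m.(q,A) ≥ g.m.(q,A); moreover similar quaternion matrices have the same right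
eigenvalues with equal algebraic and geometric multiplicities. -/
theorem am_ge_gm_and_similarity_invariance {n : ℕ}
    (A : Matrix (Fin n) (Fin n) ℍ[ℝ]) (q : ℍ[ℝ]) (hq : RightEig A q)
    (lq : ℂ) (him : 0 ≤ lq.im) (hsim : qSimilar q (toQ lq)) :
    (∀ U T : Matrix (Fin n) (Fin n) ℍ[ℝ],
      Uᴴ * U = 1 → U * Uᴴ = 1 → T = Uᴴ * A * U →
      (∀ i j : Fin n, j < i → T i j = 0) →
      (∀ i : Fin n, ∃ μ : ℂ, 0 ≤ μ.im ∧ T i i = toQ μ) →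
      Set.ncard {i : Fin n | T i i = toQ lq} ≥ gm A q) ∧
    (∀ B S S' : Matrix (Fin n) (Fin n) ℍ[ℝ], S * S' = 1 → S' * S = 1 →
      B = S' * A * S →
      (∀ p : ℍ[ℝ], RightEig A p ↔ RightEig B p) ∧
      gm A q = gm B q ∧
      (∀ T T' U U' : Matrix (Fin n) (Fin n) ℍ[ℝ],
        Uᴴ * U = 1 → U * Uᴴ = 1 → T = Uᴴ * A * U →
        (∀ i j : Fin n, j < i → T i j = 0) →
        (∀ i : Fin n, ∃ μ : ℂ, 0 ≤ μ.im ∧ T i i = toQ μ) →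
        U'ᴴ * U' = 1 → U' * U'ᴴ = 1 → T' = U'ᴴ * B * U' →
        (∀ i j : Fin n, j < i → T' i j = 0) →
        (∀ i : Fin n, ∃ μ : ℂ, 0 ≤ μ.im ∧ T' i i = toQ μ) →
        Set.ncard {i : Fin n | T i i = toQ lq} =
          Set.ncard {i : Fin n | T' i i = toQ lq})) :=
  am_ge_gm_and_similarity_invariance_general A q lq him hsim
end
end
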